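/- arXiv:0704.1100 — 2 statements merged into one kernel-verified Lean document; each statement's English description precedes it below -/
import Mathlib

section
/- (Pak's case) Let k ≥ 2, m ≥ 1 and n = mk + 1. Let σ ∈ S_n be a permutation fixing the pivot element n and having exactly m other cycles, each of length k. Then the number of transitive ordered factorizations of σ into n+m−1 star transpositions with pivot n equals ((n+m−1)!/n!) · k^m. -/
open scoped Classical

/-- The cycle type of a permutation including fixed points (cycles of length 1). -/
def fullCycleType {n : ℕ} (σ : Equiv.Perm (Fin n)) : Multiset ℕ :=
  σ.cycleType + Multiset.replicate (n - σ.support.card) 1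

/-- The number of ordered factorizations of `σ` into `r` star transpositions with
pivot `p` whose factors generate a subgroup acting transitively on `Fin n`. -/
noncomputable def starFact (n r : ℕ) (p : Fin n) (σ : Equiv.Perm (Fin n)) : ℕ :=
  Nat.card {τ : Fin r → Equiv.Perm (Fin n) //
    (∀ t, ∃ a : Fin n, a ≠ p ∧ τ t = Equiv.swap p a) ∧
    (List.ofFn τ).prod = σ ∧
    ∀ x y : Fin n, ∃ g ∈ Subgroup.closure (Set.range τ), g x = y}

/-- The series `ξ(x) = 2 x⁻¹ sinh(x/2) = Σ_{k≥0} x^{2k}/(4^k (2k+1)!)`. -/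
noncomputable def xiSeries : PowerSeries ℚ :=
  PowerSeries.mk fun k => if Even k then ((4 : ℚ) ^ (k / 2) * (k + 1).factorial)⁻¹ else 0

/-- Logarithm of a formal power series with constant term `1`. -/
noncomputable def psLog (f : PowerSeries ℚ) : PowerSeries ℚ :=
  PowerSeries.mk fun m => ∑ k ∈ Finset.range (m + 1),
    ((-1 : ℚ) ^ (k + 1) / (k : ℚ)) * PowerSeries.coeff m ((f - 1) ^ k)

/-- `ξ_{2j}`, the coefficient of `x^{2j}` in `log ξ(x)`. -/
noncomputable def xiCoeff (j : ℕ) : ℚ := PowerSeries.coeff (2 * j) (psLog xiSeries)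

/-- `|Aut β| = ∏_j f_j!` where `f_j` is the number of parts of `β` equal to `j`. -/
def autCard (β : Multiset ℕ) : ℕ := β.toFinset.prod fun j => (β.count j).factorial

/-- The power sum `p_i(α)`. -/
def pPow (i : ℕ) (α : Multiset ℕ) : ℚ := (α.map fun a => (a : ℚ) ^ i).sum

/-- `q_i(α) := p_i(α) + p_1(α) - 2`. -/
def qPow (i : ℕ) (α : Multiset ℕ) : ℚ := pPow i α + pPow 1 α - 2

/-- `q̂_i(α) := p_i(α) - 1`. -/
def qhatPow (i : ℕ) (α : Multiset ℕ) : ℚ := pPow i α - 1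

/-- `Q_g(α) := Σ_{β ⊢ g} ξ_{2β} q_{2β}(α) / |Aut β|` (equal to `1` for `g = 0`). -/
noncomputable def Qser (g : ℕ) (α : Multiset ℕ) : ℚ :=
  ∑ β : Nat.Partition g,
    (β.parts.map fun b => xiCoeff b * qPow (2 * b) α).prod / (autCard β.parts : ℚ)

/-- `Q̂_g(α) := Σ_{β ⊢ g} ξ_{2β} q̂_{2β}(α) / |Aut β|` (equal to `1` for `g = 0`). -/
noncomputable def Qhatser (g : ℕ) (α : Multiset ℕ) : ℚ :=
  ∑ β : Nat.Partition g,
    (β.parts.map fun b => xiCoeff b * qhatPow (2 * b) α).prod / (autCard β.parts : ℚ)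

/-- The star factorization number `a_g(α)`, for `α` a partition of `n = α.sum` with
`m = α.card` parts: `a_g(α) = ((n+m-2+2g)!/n!) α_1⋯α_m Q_g(α)`. -/
noncomputable def aStar (g : ℕ) (α : Multiset ℕ) : ℚ :=
  ((α.sum + Multiset.card α - 2 + 2 * g).factorial : ℚ) / (α.sum.factorial : ℚ)
    * (α.map fun a => (a : ℚ)).prod * Qser g α

/-- The scaled double Hurwitz number `b_g(α)`, for `α` a partition of `n = α.sum` with
`m = α.card` parts: `b_g(α) = (m-1+2g)! n^{m-2+2g} α_1⋯α_m Q̂_g(α)`. -/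
noncomputable def bHur (g : ℕ) (α : Multiset ℕ) : ℚ :=
  ((Multiset.card α - 1 + 2 * g).factorial : ℚ)
    * (α.sum : ℚ) ^ ((Multiset.card α : ℤ) - 2 + 2 * g)
    * (α.map fun a => (a : ℚ)).prod * Qhatser g α

/-- The transitive power `T Xₙʳ` of the Young–Jucys–Murphy element with pivot `p`. -/
noncomputable def transitivePower (n r : ℕ) (p : Fin n) :
    MonoidAlgebra ℂ (Equiv.Perm (Fin n)) :=
  ∑ v : Fin r → {j : Fin n // j ≠ p},
    if ∀ x y : Fin n, ∃ g ∈ Subgroup.closure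
        (Set.range fun t => Equiv.swap ((v t : Fin n)) p), g x = y then
      MonoidAlgebra.of ℂ (Equiv.Perm (Fin n))
        ((List.ofFn fun t => Equiv.swap ((v t : Fin n)) p).prod)
    else 0

/-- The class sum `K_α ∈ ℂSₙ` of all permutations of full cycle type `α`. -/
noncomputable def classSum (n : ℕ) (α : Multiset ℕ) : MonoidAlgebra ℂ (Equiv.Perm (Fin n)) :=
  ∑ σ : Equiv.Perm (Fin n),
    if fullCycleType σ = α then MonoidAlgebra.of ℂ (Equiv.Perm (Fin n)) σ else 0

/-!
Sort the factorizations `σ = (p a₁)⋯(p aᵣ)` whose partners are exactly the points of a set `s ∌ p`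
by their first factor. Left multiplication by `(p a)` merges the cycles of `p` and `a` if they
differ and splits the cycle of `p` otherwise, so the number `c(σ)` of cycles (fixed points
included) changes by one; by induction `2|s| + c(σ) ≤ r + |α|`. In the extremal case only two kinds
of first factor survive: a join, or the split with `a = σ⁻¹ p`, after which `a` is a fixed point
that no later factor touches, so `a` leaves `s`. A second induction shows that there are
`r! / (|s| + 1)! · ∏ (cycle lengths of σ)` extremal factorizations; its inductive step is the
identity `∑ₐ weight(a) = r + 1` for the factors by which the two kinds of first factor rescale this
count, which follows from `c(σ) = ∑ₓ 1 / (length of the cycle of x)`.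
-/

open Finset
open scoped Nat

namespace Equiv.Perm

variable {α : Type*}

theorem pow_apply_eq_pow_apply_of_forall_lt {σ τ : Perm α} {x : α} {i : ℕ}
    (h : ∀ j < i, τ ((σ ^ j) x) = σ ((σ ^ j) x)) : (τ ^ i) x = (σ ^ i) x := by
  induction i with
  | zero => rfl
  | succ i ih =>
    rw [pow_succ', pow_succ', mul_apply, mul_apply, ih fun j hj => h j (by omega), h i (by omega)]

theorem prod_ofFn_swap_apply_of_forall_ne [DecidableEq α] {r : ℕ} {p x : α} {a : Fin r → α}
    (hx : x ≠ p) (ha : ∀ t, a t ≠ x) :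
    (List.ofFn fun t => swap p (a t)).prod x = x := by
  induction r with
  | zero => simp
  | succ r ih =>
    rw [List.ofFn_succ, List.prod_cons, mul_apply, ih fun t => ha t.succ,
      swap_apply_of_ne_of_ne hx (ha 0).symm]

section Finite

variable [Finite α] {σ τ : Perm α} {p a x y : α}

theorem SameCycle.mem_of_forall_apply_mem {S : Set α} (hS : ∀ z ∈ S, σ z ∈ S) (hx : x ∈ S)
    (hxy : σ.SameCycle x y) : y ∈ S := by
  obtain ⟨i, rfl⟩ := hxy.exists_nat_pow_eq
  clear hxy
  induction i with
  | zero => exact hx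
  | succ i ih => rw [pow_succ', mul_apply]; exact hS _ ih

theorem SameCycle.of_forall_sameCycle_apply (h : ∀ z, τ.SameCycle z (σ z))
    (hxy : σ.SameCycle x y) : τ.SameCycle x y :=
  hxy.mem_of_forall_apply_mem (S := {z | τ.SameCycle x z}) (fun z hz => hz.trans (h z)) .rfl

variable [DecidableEq α]

theorem sameCycle_swap_mul_of_not_sameCycle (h : ¬σ.SameCycle p a) :
    (swap p a * σ).SameCycle p a := by
  have hP : ∃ i, (σ ^ i) p = σ.symm p :=
    (sameCycle_symm_apply_right.2 SameCycle.rfl).exists_nat_pow_eq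
  have hwalk : ((swap p a * σ) ^ Nat.find hP) p = (σ ^ Nat.find hP) p := by
    refine pow_apply_eq_pow_apply_of_forall_lt fun j hj => swap_apply_of_ne_of_ne ?_ ?_
    · exact fun hjp => Nat.find_min hP hj ((Equiv.eq_symm_apply σ).2 hjp)
    · rw [← mul_apply, ← pow_succ']
      exact fun hja => h (hja ▸ sameCycle_pow_right.2 SameCycle.rfl)
  have hend : ((swap p a * σ) ^ (Nat.find hP + 1)) p = a := by
    rw [pow_succ', mul_apply, hwalk, Nat.find_spec hP, mul_apply, apply_symm_apply,
      swap_apply_left]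
  have := (sameCycle_pow_right (n := Nat.find hP + 1)).2 (SameCycle.refl (swap p a * σ) p)
  rwa [hend] at this

theorem not_sameCycle_swap_mul_of_sameCycle (hpa : p ≠ a) (h : σ.SameCycle p a) :
    ¬(swap p a * σ).SameCycle p a := by
  have hP : ∃ i, (σ ^ i) p = a := h.exists_nat_pow_eq
  set i := Nat.find hP
  have hi : (σ ^ i) p = a := Nat.find_spec hP
  have hi0 : i ≠ 0 := fun h0 => hpa (by rw [← hi, h0, pow_zero, one_apply])
  have hret : ∀ j, 0 < j → j < i → (σ ^ j) p ≠ p := fun j hj hji hjp =>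
    Nat.find_min hP (show i - j < i by omega) <| by
      rw [← hjp, ← mul_apply, ← pow_add, Nat.sub_add_cancel hji.le, hi]
  have hwalk : ∀ l < i, ((swap p a * σ) ^ l) p = (σ ^ l) p := by
    intro l hl
    refine pow_apply_eq_pow_apply_of_forall_lt fun j hj => swap_apply_of_ne_of_ne ?_ ?_ <;>
      rw [← mul_apply, ← pow_succ']
    · exact hret (j + 1) (by omega) (by omega)
    · exact Nat.find_min hP (by omega)
  have hper : Function.IsPeriodicPt (swap p a * σ) i p := by
    rw [Function.IsPeriodicPt, Function.IsFixedPt, iterate_eq_pow,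
      show i = i - 1 + 1 by omega, pow_succ', mul_apply, hwalk _ (by omega), mul_apply,
      ← mul_apply σ, ← pow_succ', show i - 1 + 1 = i by omega, hi, swap_apply_right]
  intro hτ
  obtain ⟨j, hj⟩ := hτ.exists_nat_pow_eq
  rw [← iterate_eq_pow, ← hper.iterate_mod_apply, iterate_eq_pow,
    hwalk _ (Nat.mod_lt _ (Nat.pos_of_ne_zero hi0))] at hj
  exact Nat.find_min hP (Nat.mod_lt _ (Nat.pos_of_ne_zero hi0)) hj

end Finite

section CycleSets

variable [Fintype α] [DecidableEq α] (σ : Perm α)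

def cycleSet (x : α) : Finset α := {y | σ.SameCycle x y}

def cycleSets : Finset (Finset α) := univ.image σ.cycleSet

def numCycles : ℕ := #σ.cycleSets

def cycleLengthProd : ℕ := ∏ O ∈ σ.cycleSets, #O

variable {σ} {p a x y : α} {s t : Finset α} {r : ℕ}

@[simp]
theorem mem_cycleSet : y ∈ σ.cycleSet x ↔ σ.SameCycle x y := by simp [cycleSet]

theorem mem_cycleSet_self (x : α) : x ∈ σ.cycleSet x := mem_cycleSet.2 .rfl

theorem cycleSet_eq_cycleSet_iff : σ.cycleSet x = σ.cycleSet y ↔ σ.SameCycle x y := by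
  refine ⟨fun h => mem_cycleSet.1 (h ▸ mem_cycleSet_self y), fun h => ?_⟩
  ext z
  simp only [mem_cycleSet]
  exact ⟨h.symm.trans, h.trans⟩

theorem cycleSet_mem_cycleSets (x : α) : σ.cycleSet x ∈ σ.cycleSets :=
  mem_image_of_mem _ (mem_univ x)

theorem card_cycleSet_pos (x : α) : 0 < #(σ.cycleSet x) :=
  card_pos.2 ⟨x, mem_cycleSet_self x⟩

theorem cycleSet_eq_singleton (h : σ x = x) : σ.cycleSet x = {x} := by
  ext y
  simp only [mem_cycleSet, mem_singleton]
  exact ⟨fun hxy => (hxy.eq_of_left h).symm, fun hy => hy ▸ .rfl⟩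

theorem cycleSet_subset_of_support_subset (ht : σ.support ⊆ t) (hx : x ∈ t) :
    σ.cycleSet x ⊆ t := by
  intro y hy
  refine (mem_cycleSet.1 hy).mem_of_forall_apply_mem (S := ↑t) (fun z hz => ?_) hx
  by_cases hfix : σ z = z
  · rwa [hfix]
  · exact ht (apply_mem_support.2 (mem_support.2 hfix))

theorem cycleSet_swap_mul_of_notMem (hx : x ∉ σ.cycleSet p ∪ σ.cycleSet a) :
    (swap p a * σ).cycleSet x = σ.cycleSet x := by
  simp only [mem_union, mem_cycleSet, not_or] at hx
  have hagree : ∀ z ∈ σ.cycleSet x, (swap p a * σ) z = σ z := fun z hz => by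
    have hσz := sameCycle_apply_right.2 (mem_cycleSet.1 hz)
    exact swap_apply_of_ne_of_ne (fun h => hx.1 (h ▸ hσz).symm) (fun h => hx.2 (h ▸ hσz).symm)
  ext y
  simp only [mem_cycleSet]
  constructor
  · refine fun hxy => hxy.mem_of_forall_apply_mem (S := {z | σ.SameCycle x z}) ?_ .rfl
    exact fun z hz => (hagree z (mem_cycleSet.2 hz)).symm ▸ sameCycle_apply_right.2 hz
  · refine fun hxy => (hxy.mem_of_forall_apply_mem
      (S := {z | σ.SameCycle x z ∧ (swap p a * σ).SameCycle x z}) ?_ ⟨.rfl, .rfl⟩).2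
    rintro z ⟨hz, hz'⟩
    refine ⟨sameCycle_apply_right.2 hz, ?_⟩
    rw [← hagree z (mem_cycleSet.2 hz)]
    exact sameCycle_apply_right.2 hz'

theorem cycleSet_swap_mul_of_mem (h : ¬σ.SameCycle p a) (hx : x ∈ σ.cycleSet p ∪ σ.cycleSet a) :
    (swap p a * σ).cycleSet x = σ.cycleSet p ∪ σ.cycleSet a := by
  set τ := swap p a * σ
  have hτ : τ.SameCycle p a := sameCycle_swap_mul_of_not_sameCycle h
  have hstep : ∀ z, τ.SameCycle z (σ z) := fun z => by
    have hz : τ.SameCycle z (τ z) := sameCycle_apply_right.2 .rfl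
    rcases eq_or_ne (σ z) p with hp | hp
    · rw [hp]
      exact (show τ z = a by simp [τ, hp]) ▸ hz |>.trans hτ.symm
    rcases eq_or_ne (σ z) a with ha | ha
    · rw [ha]
      exact (show τ z = p by simp [τ, ha]) ▸ hz |>.trans hτ
    · exact (show τ z = σ z from swap_apply_of_ne_of_ne hp ha) ▸ hz
  have hU : ∀ y ∈ σ.cycleSet p ∪ σ.cycleSet a, τ.SameCycle p y := by
    simp only [mem_union, mem_cycleSet]
    rintro y (hy | hy)
    · exact hy.of_forall_sameCycle_apply hstep
    · exact hτ.trans (hy.of_forall_sameCycle_apply hstep)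
  ext y
  rw [mem_cycleSet]
  refine ⟨fun hxy => hxy.mem_of_forall_apply_mem (fun z hz => ?_) hx,
    fun hy => (hU x hx).symm.trans (hU y hy)⟩
  have hσz : σ z ∈ σ.cycleSet p ∪ σ.cycleSet a := by
    simpa only [mem_coe, mem_union, mem_cycleSet, sameCycle_apply_right] using hz
  rw [mem_coe, show τ z = swap p a (σ z) from rfl, swap_apply_def]
  split_ifs
  · exact mem_union_right _ (mem_cycleSet_self a)
  · exact mem_union_left _ (mem_cycleSet_self p)
  · exact hσz

theorem cycleSets_swap_mul (h : ¬σ.SameCycle p a) :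
    (swap p a * σ).cycleSets =
      insert (σ.cycleSet p ∪ σ.cycleSet a) (σ.cycleSets \ {σ.cycleSet p, σ.cycleSet a}) := by
  have hmem {z : α} (hz : z ∉ σ.cycleSet p ∪ σ.cycleSet a) :
      σ.cycleSet z ≠ σ.cycleSet p ∧ σ.cycleSet z ≠ σ.cycleSet a := by
    refine ⟨fun hzp => hz ?_, fun hza => hz ?_⟩
    · exact mem_union_left _ (hzp ▸ mem_cycleSet_self z)
    · exact mem_union_right _ (hza ▸ mem_cycleSet_self z)
  ext O
  simp only [cycleSets, mem_insert, mem_sdiff, mem_image, mem_univ, true_and, mem_singleton]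
  constructor
  · rintro ⟨z, rfl⟩
    by_cases hz : z ∈ σ.cycleSet p ∪ σ.cycleSet a
    · exact .inl (cycleSet_swap_mul_of_mem h hz)
    · rw [cycleSet_swap_mul_of_notMem hz]
      exact .inr ⟨⟨z, rfl⟩, not_or.2 (hmem hz)⟩
  · rintro (rfl | ⟨⟨z, rfl⟩, hz⟩)
    · exact ⟨p, cycleSet_swap_mul_of_mem h (mem_union_left _ (mem_cycleSet_self p))⟩
    · refine ⟨z, cycleSet_swap_mul_of_notMem fun hzU => hz ?_⟩
      rcases mem_union.1 hzU with hzU | hzU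
      · exact .inl (cycleSet_eq_cycleSet_iff.2 (mem_cycleSet.1 hzU).symm)
      · exact .inr (cycleSet_eq_cycleSet_iff.2 (mem_cycleSet.1 hzU).symm)

theorem union_cycleSet_notMem_cycleSets (h : ¬σ.SameCycle p a) :
    σ.cycleSet p ∪ σ.cycleSet a ∉ σ.cycleSets := by
  simp only [cycleSets, mem_image, mem_univ, true_and, not_exists]
  intro z hz
  have hzp := mem_cycleSet.1 (hz ▸ mem_union_left _ (mem_cycleSet_self p))
  exact h (hzp.symm.trans (mem_cycleSet.1 (hz ▸ mem_union_right _ (mem_cycleSet_self a))))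

theorem numCycles_swap_mul_of_not_sameCycle (h : ¬σ.SameCycle p a) :
    (swap p a * σ).numCycles + 1 = σ.numCycles := by
  have hne : σ.cycleSet p ≠ σ.cycleSet a := fun he => h (cycleSet_eq_cycleSet_iff.1 he)
  have hU : σ.cycleSet p ∪ σ.cycleSet a ∉ σ.cycleSets \ {σ.cycleSet p, σ.cycleSet a} :=
    fun hU => union_cycleSet_notMem_cycleSets h (mem_sdiff.1 hU).1
  have hsub : {σ.cycleSet p, σ.cycleSet a} ⊆ σ.cycleSets :=
    insert_subset (cycleSet_mem_cycleSets p) (singleton_subset_iff.2 (cycleSet_mem_cycleSets a))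
  have hle := card_le_card hsub
  rw [card_pair hne] at hle
  rw [numCycles, cycleSets_swap_mul h, card_insert_of_notMem hU, card_sdiff_of_subset hsub,
    card_pair hne, numCycles]
  omega

theorem cycleLengthProd_swap_mul_of_not_sameCycle (h : ¬σ.SameCycle p a) :
    (swap p a * σ).cycleLengthProd * (#(σ.cycleSet p) * #(σ.cycleSet a)) =
      σ.cycleLengthProd * (#(σ.cycleSet p) + #(σ.cycleSet a)) := by
  have hne : σ.cycleSet p ≠ σ.cycleSet a := fun he => h (cycleSet_eq_cycleSet_iff.1 he)
  have hdisj : _root_.Disjoint (σ.cycleSet p) (σ.cycleSet a) := disjoint_left.2 fun z hzp hza =>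
    h ((mem_cycleSet.1 hzp).trans (mem_cycleSet.1 hza).symm)
  have hU : σ.cycleSet p ∪ σ.cycleSet a ∉ σ.cycleSets \ {σ.cycleSet p, σ.cycleSet a} :=
    fun hU => union_cycleSet_notMem_cycleSets h (mem_sdiff.1 hU).1
  have hsub : {σ.cycleSet p, σ.cycleSet a} ⊆ σ.cycleSets :=
    insert_subset (cycleSet_mem_cycleSets p) (singleton_subset_iff.2 (cycleSet_mem_cycleSets a))
  rw [cycleLengthProd, cycleSets_swap_mul h, prod_insert hU, cycleLengthProd,
    ← prod_sdiff hsub, prod_pair hne, card_union_of_disjoint hdisj]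
  ring

theorem numCycles_swap_mul_of_sameCycle (hpa : p ≠ a) (h : σ.SameCycle p a) :
    (swap p a * σ).numCycles = σ.numCycles + 1 := by
  have := numCycles_swap_mul_of_not_sameCycle (not_sameCycle_swap_mul_of_sameCycle hpa h)
  rw [swap_mul_self_mul] at this
  omega

theorem cycleLengthProd_swap_mul_of_apply_eq (hpa : p ≠ a) (hap : σ a = p) :
    (swap p a * σ).cycleLengthProd * #(σ.cycleSet p) =
      σ.cycleLengthProd * (#(σ.cycleSet p) - 1) := by
  set τ := swap p a * σ
  have hτ : ¬τ.SameCycle p a :=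
    not_sameCycle_swap_mul_of_sameCycle hpa (hap ▸ sameCycle_apply_left.2 .rfl)
  have hτa : τ.cycleSet a = {a} := cycleSet_eq_singleton (by simp [τ, hap])
  have hσp : σ.cycleSet p = τ.cycleSet p ∪ {a} := by
    rw [← hτa, ← swap_mul_self_mul p a σ]
    exact cycleSet_swap_mul_of_mem hτ (mem_union_left _ (mem_cycleSet_self p))
  have hdisj : _root_.Disjoint (τ.cycleSet p) {a} :=
    disjoint_singleton_right.2 fun ha => hτ (mem_cycleSet.1 ha)
  have hprod := cycleLengthProd_swap_mul_of_not_sameCycle hτ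
  rw [swap_mul_self_mul, hτa, card_singleton] at hprod
  rw [hσp, card_union_of_disjoint hdisj, card_singleton, Nat.add_sub_cancel]
  linarith

theorem sum_cycleSet_inv_card_cycleSet (x : α) :
    ∑ y ∈ σ.cycleSet x, (#(σ.cycleSet y) : ℚ)⁻¹ = 1 := by
  rw [sum_congr rfl fun y hy => by rw [← cycleSet_eq_cycleSet_iff.2 (mem_cycleSet.1 hy)],
    sum_const, nsmul_eq_mul, mul_inv_cancel₀]
  exact_mod_cast (card_cycleSet_pos x).ne'

theorem sum_inv_card_cycleSet : ∑ x, (#(σ.cycleSet x) : ℚ)⁻¹ = σ.numCycles := by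
  rw [← sum_fiberwise_of_maps_to (g := σ.cycleSet) (t := σ.cycleSets)
    fun x _ => cycleSet_mem_cycleSets x, numCycles, card_eq_sum_ones, Nat.cast_sum]
  refine sum_congr rfl fun O hO => ?_
  obtain ⟨y, -, rfl⟩ := mem_image.1 hO
  have hfiber : ({x | σ.cycleSet x = σ.cycleSet y} : Finset α) = σ.cycleSet y := by
    ext x
    simp [cycleSet_eq_cycleSet_iff, sameCycle_comm]
  rw [hfiber, sum_cycleSet_inv_card_cycleSet, Nat.cast_one]

theorem sum_inv_card_cycleSet_of_support_subset (ht : σ.support ⊆ t) :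
    ∑ x ∈ t, (#(σ.cycleSet x) : ℚ)⁻¹ = σ.numCycles - Fintype.card α + #t := by
  have hfixed : ∑ x ∈ tᶜ, (#(σ.cycleSet x) : ℚ)⁻¹ = #tᶜ := by
    rw [card_eq_sum_ones, Nat.cast_sum]
    refine sum_congr rfl fun x hx => ?_
    rw [cycleSet_eq_singleton (notMem_support.1 fun h => mem_compl.1 hx (ht h)), card_singleton,
      Nat.cast_one, inv_one]
  rw [← sum_inv_card_cycleSet, ← sum_add_sum_compl t, hfixed, card_compl,
    Nat.cast_sub (card_le_univ t)]
  ring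

theorem card_add_one_le_numCycles_add_card (ht : σ.support ⊆ t) (hx : x ∈ t) :
    Fintype.card α + 1 ≤ σ.numCycles + #t := by
  have h := sum_le_sum_of_subset_of_nonneg (cycleSet_subset_of_support_subset ht hx)
    (f := fun y => (#(σ.cycleSet y) : ℚ)⁻¹) fun _ _ _ => by positivity
  rw [sum_cycleSet_inv_card_cycleSet, sum_inv_card_cycleSet_of_support_subset ht] at h
  exact_mod_cast (by linarith : (Fintype.card α : ℚ) + 1 ≤ σ.numCycles + #t)

theorem numCycles_le_card : σ.numCycles ≤ Fintype.card α :=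
  card_image_le.trans_eq card_univ

theorem cycleLengthProd_one : (1 : Perm α).cycleLengthProd = 1 :=
  prod_eq_one fun O hO => by
    obtain ⟨x, -, rfl⟩ := mem_image.1 hO
    rw [cycleSet_eq_singleton rfl, card_singleton]

theorem image_cycleSet_support :
    σ.support.image σ.cycleSet = σ.cycleFactorsFinset.image support := by
  have hcycleOf : σ.support.image σ.cycleOf = σ.cycleFactorsFinset := by
    ext c
    simp only [mem_image]
    refine ⟨fun ⟨x, hx, hc⟩ => hc ▸ cycleOf_mem_cycleFactorsFinset_iff.2 hx, fun hc => ?_⟩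
    obtain ⟨x, hx⟩ := (mem_cycleFactorsFinset_iff.1 hc).1.nonempty_support
    exact ⟨x, mem_cycleFactorsFinset_support_le hc hx, (cycle_is_cycleOf hx hc).symm⟩
  rw [← hcycleOf, image_image]
  refine image_congr fun x hx => ?_
  ext y
  rw [mem_cycleSet, Function.comp_apply, mem_support_cycleOf_iff]
  exact ⟨fun h => ⟨h, mem_coe.1 hx⟩, And.left⟩

theorem map_card_cycleSets : σ.cycleSets.val.map card = σ.partition.parts := by
  have hdisj : _root_.Disjoint (σ.support.image σ.cycleSet) (σ.supportᶜ.image σ.cycleSet) := by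
    refine disjoint_left.2 fun O hO hO' => ?_
    obtain ⟨x, hx, rfl⟩ := mem_image.1 hO
    obtain ⟨y, hy, hxy⟩ := mem_image.1 hO'
    have hxy' : x ∈ σ.cycleSet y := hxy ▸ mem_cycleSet_self x
    rw [cycleSet_eq_singleton (notMem_support.1 (mem_compl.1 hy)), mem_singleton] at hxy'
    exact mem_compl.1 hy (hxy' ▸ hx)
  have hsupport : (σ.cycleFactorsFinset.image support).val.map card = σ.cycleType := by
    rw [image_val_of_injOn, Multiset.map_map, cycleType_def]
    intro c hc d hd hcd
    obtain ⟨x, hx⟩ := (mem_cycleFactorsFinset_iff.1 hc).1.nonempty_support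
    rw [cycle_is_cycleOf hx hc, cycle_is_cycleOf (show x ∈ d.support from hcd ▸ hx) hd]
  have hfixed : (σ.supportᶜ.image σ.cycleSet).val.map card =
      Multiset.replicate (Fintype.card α - #σ.support) 1 := by
    have hsingleton : ∀ y ∈ σ.supportᶜ, σ.cycleSet y = {y} := fun y hy =>
      cycleSet_eq_singleton (notMem_support.1 (mem_compl.1 hy))
    rw [image_val_of_injOn fun y hy z hz hyz => by
        simpa [hsingleton y hy, hsingleton z hz] using hyz,
      Multiset.map_map, ← card_compl, card_def,
      Multiset.map_congr rfl (g := fun _ => 1) fun y hy => by simp [hsingleton y hy],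
      Multiset.map_const']
  rw [cycleSets, ← union_compl σ.support, image_union, ← disjUnion_eq_union _ _ hdisj,
    disjUnion_val, Multiset.map_add, image_cycleSet_support, hsupport, hfixed, parts_partition]

/-- Star factorizations `σ = (p a₀)(p a₁)⋯(p aᵣ₋₁)`, recorded by their sequences of partners. -/
noncomputable def starSeqs (r : ℕ) (p : α) (s : Finset α) (σ : Perm α) : Finset (Fin r → α) :=
  {a | Set.range a = s ∧ (List.ofFn fun t => swap p (a t)).prod = σ}

@[simp]
theorem mem_starSeqs {a : Fin r → α} :
    a ∈ starSeqs r p s σ ↔ Set.range a = s ∧ (List.ofFn fun t => swap p (a t)).prod = σ := by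
  simp [starSeqs]

theorem mem_starSeqs_zero {a : Fin 0 → α} : a ∈ starSeqs 0 p s σ ↔ s = ∅ ∧ σ = 1 := by
  rw [mem_starSeqs, Set.range_eq_empty, List.ofFn_zero, List.prod_nil, eq_comm, coe_eq_empty,
    eq_comm (a := 1)]

theorem cons_mem_starSeqs_succ_iff {c : Fin r → α} :
    Fin.cons a c ∈ starSeqs (r + 1) p s σ ↔ a ∈ s ∧
      (c ∈ starSeqs r p s (swap p a * σ) ∨ c ∈ starSeqs r p (s.erase a) (swap p a * σ)) := by
  have hrange : insert a (Set.range c) = s ↔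
      a ∈ s ∧ (Set.range c = s ∨ Set.range c = ↑(s.erase a)) := by
    rw [coe_erase]
    constructor
    · intro h
      refine ⟨mem_coe.1 (h ▸ Set.mem_insert a _), ?_⟩
      by_cases hac : a ∈ Set.range c
      · exact .inl (h ▸ (Set.insert_eq_of_mem hac).symm)
      · exact .inr (h ▸ (Set.insert_sdiff_self_of_notMem hac).symm)
    · rintro ⟨ha, hc | hc⟩ <;> rw [hc]
      · exact Set.insert_eq_of_mem ha
      · rw [Set.insert_sdiff_singleton, Set.insert_eq_of_mem (mem_coe.2 ha)]
  have hprod : ∀ τ : Perm α, swap p a * τ = σ ↔ τ = swap p a * σ := fun τ =>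
    ⟨fun h => h ▸ (swap_mul_self_mul p a τ).symm, fun h => h ▸ swap_mul_self_mul p a σ⟩
  simp only [mem_starSeqs, Fin.range_cons, List.ofFn_succ, Fin.cons_zero, Fin.cons_succ,
    List.prod_cons, hrange, hprod]
  tauto

theorem card_starSeqs_succ :
    #(starSeqs (r + 1) p s σ) = ∑ a ∈ s,
      (#(starSeqs r p s (swap p a * σ)) + #(starSeqs r p (s.erase a) (swap p a * σ))) := by
  have hdisj : ∀ a ∈ s, _root_.Disjoint (starSeqs r p s (swap p a * σ))
      (starSeqs r p (s.erase a) (swap p a * σ)) := fun a ha => disjoint_left.2 fun c hc hc' => by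
    have hmem : a ∈ Set.range c := (mem_starSeqs.1 hc).1 ▸ mem_coe.2 ha
    rw [(mem_starSeqs.1 hc').1] at hmem
    exact notMem_erase a s hmem
  calc #(starSeqs (r + 1) p s σ)
      = #(s.sigma fun a => starSeqs r p s (swap p a * σ) ∪
          starSeqs r p (s.erase a) (swap p a * σ)) := by
        refine card_nbij' (fun b => ⟨b 0, Fin.tail b⟩) (fun x => Fin.cons x.1 x.2) ?_ ?_ ?_ ?_
        · intro b hb
          rw [mem_coe, ← Fin.cons_self_tail b, cons_mem_starSeqs_succ_iff] at hb
          exact mem_sigma.2 ⟨hb.1, mem_union.2 hb.2⟩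
        · rintro ⟨a, c⟩ hx
          rw [mem_coe, mem_sigma, mem_union] at hx
          exact cons_mem_starSeqs_succ_iff.2 hx
        · exact fun b _ => Fin.cons_self_tail b
        · exact fun x _ => by simp
    _ = _ := by
        rw [card_sigma]
        exact sum_congr rfl fun a ha => card_union_of_disjoint (hdisj a ha)

theorem apply_eq_of_mem_starSeqs_erase {c : Fin r → α} (hpa : p ≠ a)
    (hc : c ∈ starSeqs r p (s.erase a) (swap p a * σ)) : σ a = p := by
  obtain ⟨hrange, hprod⟩ := mem_starSeqs.1 hc
  have hca : ∀ t, c t ≠ a := fun t => by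
    have hct : c t ∈ (↑(s.erase a) : Set α) := hrange ▸ Set.mem_range_self t
    exact ne_of_mem_erase hct
  have hfix := prod_ofFn_swap_apply_of_forall_ne hpa.symm hca
  rw [hprod, mul_apply, swap_apply_eq_iff, swap_apply_right] at hfix
  exact hfix

theorem le_of_starSeqs_nonempty (hp : p ∉ s) (h : (starSeqs r p s σ).Nonempty) :
    2 * #s + σ.numCycles ≤ r + Fintype.card α := by
  induction r generalizing s σ with
  | zero =>
    obtain ⟨c, hc⟩ := h
    obtain ⟨rfl, rfl⟩ := mem_starSeqs_zero.1 hc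
    simpa using numCycles_le_card
  | succ r ih =>
    obtain ⟨b, hb⟩ := h
    rw [← Fin.cons_self_tail b, cons_mem_starSeqs_succ_iff] at hb
    obtain ⟨ha, hb⟩ := hb
    have hpa : p ≠ b 0 := fun h => hp (h ▸ ha)
    rcases hb with hb | hb
    · have := ih hp ⟨_, hb⟩
      by_cases hsc : σ.SameCycle p (b 0)
      · have := numCycles_swap_mul_of_sameCycle hpa hsc
        omega
      · have := numCycles_swap_mul_of_not_sameCycle hsc
        omega
    · have hsc : σ.SameCycle p (b 0) :=
        apply_eq_of_mem_starSeqs_erase hpa hb ▸ sameCycle_apply_left.2 .rfl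
      have := ih (fun h => hp (mem_of_mem_erase h)) ⟨_, hb⟩
      have := numCycles_swap_mul_of_sameCycle hpa hsc
      have := card_erase_add_one ha
      omega

/-- Removing the first factor `(p a)` of a minimal star factorization rescales the count
`r! / (#s + 1)! * ∏ (cycle lengths)` by this weight: `(p a)` either joins the cycles of `p` and `a`,
or it is `a = σ⁻¹ p` and splits `a` off as a fixed point that no later factor moves. -/
noncomputable def starWeight (σ : Perm α) (p : α) (s : Finset α) (a : α) : ℚ :=
  if σ.SameCycle p a then
    if σ a = p then (#s + 1) * (1 - (#(σ.cycleSet p) : ℚ)⁻¹) else 0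
  else (#(σ.cycleSet a) : ℚ)⁻¹ + (#(σ.cycleSet p) : ℚ)⁻¹

theorem sum_starWeight (hp : p ∉ s) (hσ : σ.support ⊆ insert p s) :
    ∑ a ∈ s, starWeight σ p s a = 2 * #s + σ.numCycles - Fintype.card α := by
  set L : ℚ := (#(σ.cycleSet p) : ℚ)
  have hL : L ≠ 0 := Nat.cast_ne_zero.2 (card_cycleSet_pos p).ne'
  have hsub : σ.cycleSet p ⊆ insert p s :=
    cycleSet_subset_of_support_subset hσ (mem_insert_self p s)
  have hsplit : ∑ a ∈ s with σ.SameCycle p a,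
      (if σ a = p then (#s + 1) * (1 - L⁻¹) else 0) = (#s + 1) * (1 - L⁻¹) := by
    by_cases hfix : σ p = p
    · have hL1 : L = 1 := by simp [L, cycleSet_eq_singleton hfix]
      simp [hL1]
    · have hne : σ.symm p ≠ p := fun h => hfix (by simpa [h] using apply_symm_apply σ p)
      have hmoved : σ.symm p ∈ σ.support := mem_support.2 (by rw [apply_symm_apply]; exact hne.symm)
      simp_rw [← eq_symm_apply]
      rw [sum_ite_eq', if_pos]
      exact mem_filter.2 ⟨(mem_insert.1 (hσ hmoved)).resolve_left hne,
        sameCycle_symm_apply_right.2 .rfl⟩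
  have hjoin : ({a ∈ s | ¬σ.SameCycle p a} : Finset α) = insert p s \ σ.cycleSet p := by
    ext a
    simp only [mem_filter, mem_sdiff, mem_insert, mem_cycleSet]
    constructor
    · exact fun ⟨ha, h⟩ => ⟨.inr ha, h⟩
    · rintro ⟨rfl | ha, h⟩
      · exact absurd .rfl h
      · exact ⟨ha, h⟩
  simp only [starWeight]
  rw [sum_ite, hsplit, hjoin, sum_add_distrib, sum_sdiff_eq_sub hsub,
    sum_inv_card_cycleSet_of_support_subset hσ, sum_cycleSet_inv_card_cycleSet, sum_const,
    card_sdiff_of_subset hsub, nsmul_eq_mul, Nat.cast_sub (card_le_card hsub),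
    card_insert_of_notMem hp]
  simp only [L] at hL ⊢
  field_simp
  push_cast
  ring

theorem support_swap_mul_subset (ha : a ∈ s) (hσ : σ.support ⊆ insert p s) :
    (swap p a * σ).support ⊆ insert p s := by
  refine (support_mul_le _ _).trans (union_subset ?_ hσ)
  by_cases hpa : p = a
  · simp [hpa]
  · rw [support_swap hpa]
    exact insert_subset_insert _ (singleton_subset_iff.2 ha)

theorem cast_card_starSeqs_swap_mul_of_not_sameCycle
    (ih : ∀ {s : Finset α} {σ : Perm α}, p ∉ s → σ.support ⊆ insert p s →
      r + Fintype.card α = 2 * #s + σ.numCycles →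
      #(starSeqs r p s σ) * (#s + 1)! = r ! * σ.cycleLengthProd)
    (hp : p ∉ s) (hσ : σ.support ⊆ insert p s)
    (hr : r + 1 + Fintype.card α = 2 * #s + σ.numCycles) (ha : a ∈ s) (h : ¬σ.SameCycle p a) :
    (#(starSeqs r p s (swap p a * σ)) : ℚ) * (#s + 1)! =
      r ! * σ.cycleLengthProd * ((#(σ.cycleSet a) : ℚ)⁻¹ + (#(σ.cycleSet p) : ℚ)⁻¹) := by
  have hcount := ih hp (support_swap_mul_subset ha hσ)
    (by have := numCycles_swap_mul_of_not_sameCycle h; omega)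
  have hprod : ((swap p a * σ).cycleLengthProd : ℚ) * (#(σ.cycleSet p) * #(σ.cycleSet a)) =
      σ.cycleLengthProd * (#(σ.cycleSet p) + #(σ.cycleSet a)) := by
    exact_mod_cast cycleLengthProd_swap_mul_of_not_sameCycle h
  have hLp : (#(σ.cycleSet p) : ℚ) ≠ 0 := Nat.cast_ne_zero.2 (card_cycleSet_pos p).ne'
  have hLa : (#(σ.cycleSet a) : ℚ) ≠ 0 := Nat.cast_ne_zero.2 (card_cycleSet_pos a).ne'
  have hP : ((swap p a * σ).cycleLengthProd : ℚ) =
      σ.cycleLengthProd * ((#(σ.cycleSet a) : ℚ)⁻¹ + (#(σ.cycleSet p) : ℚ)⁻¹) := by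
    field_simp
    linear_combination hprod
  rw [mul_assoc, ← hP]
  exact_mod_cast hcount

theorem cast_card_starSeqs_erase_swap_mul_of_apply_eq
    (ih : ∀ {s : Finset α} {σ : Perm α}, p ∉ s → σ.support ⊆ insert p s →
      r + Fintype.card α = 2 * #s + σ.numCycles →
      #(starSeqs r p s σ) * (#s + 1)! = r ! * σ.cycleLengthProd)
    (hp : p ∉ s) (hσ : σ.support ⊆ insert p s)
    (hr : r + 1 + Fintype.card α = 2 * #s + σ.numCycles) (ha : a ∈ s) (hap : σ a = p) :
    (#(starSeqs r p (s.erase a) (swap p a * σ)) : ℚ) * (#s + 1)! =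
      r ! * σ.cycleLengthProd * ((#s + 1) * (1 - (#(σ.cycleSet p) : ℚ)⁻¹)) := by
  have hpa : p ≠ a := fun h => hp (h ▸ ha)
  have hsupp : (swap p a * σ).support ⊆ insert p (s.erase a) := fun x hx => by
    rcases mem_insert.1 (support_swap_mul_subset ha hσ hx) with rfl | hxs
    · exact mem_insert_self _ _
    · refine mem_insert_of_mem (mem_erase.2 ⟨?_, hxs⟩)
      rintro rfl
      exact mem_support.1 hx (by simp [hap])
  have hcount := ih (fun h => hp (mem_of_mem_erase h)) hsupp (by
    have := numCycles_swap_mul_of_sameCycle hpa (hap ▸ sameCycle_apply_left.2 .rfl)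
    have := card_erase_add_one ha
    omega)
  rw [card_erase_add_one ha] at hcount
  have hcount' : (#(starSeqs r p (s.erase a) (swap p a * σ)) : ℚ) * (#s)! =
      r ! * (swap p a * σ).cycleLengthProd := by exact_mod_cast hcount
  have hprod : ((swap p a * σ).cycleLengthProd : ℚ) * #(σ.cycleSet p) =
      σ.cycleLengthProd * (#(σ.cycleSet p) - 1) := by
    rw [← Nat.cast_pred (card_cycleSet_pos p)]
    exact_mod_cast cycleLengthProd_swap_mul_of_apply_eq hpa hap
  have hLp : (#(σ.cycleSet p) : ℚ) ≠ 0 := Nat.cast_ne_zero.2 (card_cycleSet_pos p).ne'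
  have hP : ((swap p a * σ).cycleLengthProd : ℚ) =
      σ.cycleLengthProd * (1 - (#(σ.cycleSet p) : ℚ)⁻¹) := by
    field_simp
    linear_combination hprod
  rw [Nat.factorial_succ]
  push_cast
  linear_combination (#s + 1 : ℚ) * hcount' + (#s + 1 : ℚ) * r ! * hP

theorem cast_card_starSeqs_swap_mul_add_mul_factorial
    (ih : ∀ {s : Finset α} {σ : Perm α}, p ∉ s → σ.support ⊆ insert p s →
      r + Fintype.card α = 2 * #s + σ.numCycles →
      #(starSeqs r p s σ) * (#s + 1)! = r ! * σ.cycleLengthProd)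
    (hp : p ∉ s) (hσ : σ.support ⊆ insert p s)
    (hr : r + 1 + Fintype.card α = 2 * #s + σ.numCycles) (ha : a ∈ s) :
    ((#(starSeqs r p s (swap p a * σ)) + #(starSeqs r p (s.erase a) (swap p a * σ)) : ℕ) : ℚ) *
      (#s + 1)! = r ! * σ.cycleLengthProd * starWeight σ p s a := by
  have hpa : p ≠ a := fun h => hp (h ▸ ha)
  have hkeep : σ.SameCycle p a → #(starSeqs r p s (swap p a * σ)) = 0 := fun hsc => by
    rw [card_eq_zero, ← not_nonempty_iff_eq_empty]
    intro hne
    have := le_of_starSeqs_nonempty hp hne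
    have := numCycles_swap_mul_of_sameCycle hpa hsc
    omega
  have hdrop : σ a ≠ p → #(starSeqs r p (s.erase a) (swap p a * σ)) = 0 := fun hap =>
    card_eq_zero.2 (eq_empty_of_forall_notMem fun c hc =>
      hap (apply_eq_of_mem_starSeqs_erase hpa hc))
  unfold starWeight
  by_cases hsc : σ.SameCycle p a
  · rw [if_pos hsc, hkeep hsc]
    by_cases hap : σ a = p
    · rw [if_pos hap, Nat.zero_add]
      exact cast_card_starSeqs_erase_swap_mul_of_apply_eq ih hp hσ hr ha hap
    · rw [if_neg hap, hdrop hap]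
      simp
  · rw [if_neg hsc, hdrop fun hap => hsc (hap ▸ sameCycle_apply_left.2 .rfl), Nat.add_zero]
    exact cast_card_starSeqs_swap_mul_of_not_sameCycle ih hp hσ hr ha hsc

theorem card_starSeqs_mul_factorial (hp : p ∉ s) (hσ : σ.support ⊆ insert p s)
    (hr : r + Fintype.card α = 2 * #s + σ.numCycles) :
    #(starSeqs r p s σ) * (#s + 1)! = r ! * σ.cycleLengthProd := by
  induction r generalizing s σ with
  | zero =>
    have hle := card_add_one_le_numCycles_add_card hσ (mem_insert_self p s)
    rw [card_insert_of_notMem hp] at hle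
    obtain rfl : s = ∅ := card_eq_zero.1 (by omega)
    obtain rfl : σ = 1 := by
      have := (card_le_card hσ).trans_eq (card_singleton p)
      have := card_support_ne_one σ
      exact support_eq_empty_iff.1 (card_eq_zero.1 (by omega))
    have huniv : starSeqs 0 p ∅ (1 : Perm α) = univ :=
      eq_univ_of_forall fun c => mem_starSeqs_zero.2 ⟨rfl, rfl⟩
    simp [huniv, cycleLengthProd_one]
  | succ r ih =>
    have hr' : (2 * #s + σ.numCycles - Fintype.card α : ℚ) = r + 1 := by
      rw [sub_eq_iff_eq_add]; exact_mod_cast hr.symm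
    have key : (#(starSeqs (r + 1) p s σ) : ℚ) * (#s + 1)! =
        r ! * σ.cycleLengthProd * (r + 1) := by
      rw [card_starSeqs_succ, Nat.cast_sum, sum_mul,
        sum_congr rfl fun a ha => cast_card_starSeqs_swap_mul_add_mul_factorial ih hp hσ hr ha,
        ← mul_sum, sum_starWeight hp hσ, hr']
    have hcast : ((#(starSeqs (r + 1) p s σ) * (#s + 1)! : ℕ) : ℚ) =
        ((r + 1)! * σ.cycleLengthProd : ℕ) := by
      push_cast
      rw [key, Nat.factorial_succ]
      push_cast
      ring
    exact_mod_cast hcast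

end CycleSets

theorem forall_exists_mem_closure_swap_apply_eq_iff [DecidableEq α] {ι : Type*} {p : α}
    {a : ι → α} :
    (∀ x y, ∃ g ∈ Subgroup.closure (Set.range fun i => swap p (a i)), g x = y) ↔
      ∀ x ≠ p, x ∈ Set.range a := by
  constructor
  · intro h x hxp
    by_contra hx
    obtain ⟨g, hg, hgx⟩ := h x p
    have hstab : Subgroup.closure (Set.range fun i => swap p (a i)) ≤
        MulAction.stabilizer (Perm α) x := by
      rw [Subgroup.closure_le]
      rintro _ ⟨i, rfl⟩
      exact swap_apply_of_ne_of_ne hxp fun h => hx ⟨i, h.symm⟩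
    exact hxp ((MulAction.mem_stabilizer_iff.1 (hstab hg)).symm.trans hgx)
  · intro h
    have hfrom : ∀ x, ∃ g ∈ Subgroup.closure (Set.range fun i => swap p (a i)), g p = x := by
      intro x
      by_cases hx : x = p
      · exact ⟨1, Subgroup.one_mem _, hx ▸ rfl⟩
      · obtain ⟨i, rfl⟩ := h x hx
        exact ⟨_, Subgroup.subset_closure ⟨i, rfl⟩, swap_apply_left _ _⟩
    intro x y
    obtain ⟨g, hg, rfl⟩ := hfrom x
    obtain ⟨g', hg', rfl⟩ := hfrom y
    exact ⟨g' * g⁻¹, Subgroup.mul_mem _ hg' (Subgroup.inv_mem _ hg), by simp⟩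

end Equiv.Perm

section

open Equiv Perm

theorem starFact_eq_card_starSeqs {n r : ℕ} (p : Fin n) (σ : Perm (Fin n)) :
    starFact n r p σ = #(starSeqs r p (univ.erase p) σ) := by
  have hrange {a : Fin r → Fin n} : Set.range a = ↑(univ.erase p) ↔
      (∀ t, a t ≠ p) ∧ ∀ x ≠ p, x ∈ Set.range a := by
    simp only [coe_erase, coe_univ, Set.ext_iff, Set.mem_sdiff, Set.mem_univ, true_and,
      Set.mem_singleton_iff]
    exact ⟨fun h => ⟨fun t => (h _).1 ⟨t, rfl⟩, fun x hx => (h x).2 hx⟩,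
      fun h x => ⟨by rintro ⟨t, rfl⟩; exact h.1 t, h.2 x⟩⟩
  have hswap {τ : Fin r → Perm (Fin n)} (hτ : ∀ t, ∃ a, a ≠ p ∧ τ t = swap p a) :
      τ = fun t => swap p (τ t p) := funext fun t => by
    obtain ⟨a, -, ha⟩ := hτ t
    rw [ha, swap_apply_left]
  rw [starFact, ← Nat.card_eq_finsetCard]
  refine Nat.card_congr
    { toFun := fun τ => ⟨fun t => τ.1 t p, ?_⟩
      invFun := fun a => ⟨fun t => swap p (a.1 t), ?_⟩
      left_inv := fun τ => Subtype.ext (hswap τ.2.1).symm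
      right_inv := fun a => Subtype.ext (funext fun t => swap_apply_left _ _) }
  · obtain ⟨hstar, hprod, htrans⟩ := τ.2
    rw [hswap hstar, forall_exists_mem_closure_swap_apply_eq_iff] at htrans
    refine mem_starSeqs.2 ⟨hrange.2 ⟨fun t => ?_, htrans⟩, by rwa [← hswap hstar]⟩
    obtain ⟨a, hap, ha⟩ := hstar t
    rw [ha, swap_apply_left]
    exact hap
  · obtain ⟨hr, hprod⟩ := mem_starSeqs.1 a.2
    obtain ⟨hne, hcover⟩ := hrange.1 hr
    exact ⟨fun t => ⟨a.1 t, hne t, rfl⟩, hprod,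
      forall_exists_mem_closure_swap_apply_eq_iff.2 hcover⟩

theorem starFact_mul_factorial {n r : ℕ} (p : Fin n) (σ : Perm (Fin n))
    (hr : r + 2 = n + Multiset.card (fullCycleType σ)) :
    starFact n r p σ * n ! = r ! * (fullCycleType σ).prod := by
  have hfull : fullCycleType σ = σ.cycleSets.val.map card := by
    rw [map_card_cycleSets, parts_partition, fullCycleType, Fintype.card_fin]
  have hs : #(univ.erase p) + 1 = n := by
    rw [card_erase_add_one (mem_univ p), card_univ, Fintype.card_fin]
  have hc : r + Fintype.card (Fin n) = 2 * #(univ.erase p) + σ.numCycles := by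
    rw [numCycles, card_def σ.cycleSets, ← Multiset.card_map card, ← hfull, Fintype.card_fin]
    omega
  have hcount := card_starSeqs_mul_factorial (notMem_erase p univ) (by simp) hc
  rw [hs, cycleLengthProd, prod_eq_multiset_prod, ← hfull] at hcount
  rw [starFact_eq_card_starSeqs, hcount]

end

/-- Pak's case: for `n = mk+1` and `σ` fixing the pivot `n` with `m`
other cycles each of length `k`, the number of transitive ordered factorizations of
`σ` into `n+m-1` star transpositions with pivot `n` is `((n+m-1)!/n!) kᵐ`. -/
theorem pak_case (k m n : ℕ) (hn : n = m * k + 1)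
    (σ : Equiv.Perm (Fin n))
    (hσ : fullCycleType σ = 1 ::ₘ Multiset.replicate m k) :
    (starFact n (n + m - 1) ⟨n - 1, by omega⟩ σ : ℚ) =
      ((n + m - 1).factorial : ℚ) / (n.factorial : ℚ) * (k : ℚ) ^ m := by
  have h := starFact_mul_factorial (r := n + m - 1) ⟨n - 1, by omega⟩ σ
    (by rw [hσ, Multiset.card_cons, Multiset.card_replicate]; omega)
  rw [hσ, Multiset.prod_cons, Multiset.prod_replicate, one_mul] at h
  rw [div_mul_eq_mul_div, eq_div_iff (by positivity)]
  exact_mod_cast h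
end

section
/- Let α be a partition of n. Then in the ring of formal power series ℚ[[x]], Σ_{g≥0} Q_g(α) x^{2g} = ξ(x)^{n−1} · Σ_{g≥0} Q̂_g(α) x^{2g}. -/
open scoped Classical

/-!
With `y = x²`, the partition sum `∑_{β ⊢ g} c_β / |Aut β|` is the coefficient of `y^g` in
`exp (∑_j c_j y^j)`. Since `p_1(α) = n`, we have `q_{2j}(α) = q̂_{2j}(α) + (n - 1)`, so the exponent
for `Q` is the exponent for `Q̂` plus `(n - 1) log ξ(x)`, and the theorem is `exp (a + b) =
exp a · exp b` together with `exp ((n - 1) log ξ) = ξ^{n-1}`. Rather than composing with `exp`,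
we check that both sides solve the same linear differential equation `F' = P F` with `F(0) = 1`,
whose solution is unique over `ℚ`.
-/

namespace PowerSeries

variable {A : Type*} [CommRing A]

theorem coeff_pow_eq_zero_of_lt {u : A⟦X⟧} (hu : constantCoeff u = 0) {m k : ℕ} (h : m < k) :
    coeff m (u ^ k) = 0 :=
  coeff_of_lt_order m ((Nat.cast_lt.2 h).trans_le (le_order_pow_of_constantCoeff_eq_zero k hu))

theorem hasSubst_sub_one {f : A⟦X⟧} (hf : constantCoeff f = 1) : HasSubst (f - 1) :=
  HasSubst.of_constantCoeff_zero' (by simp [hf])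

theorem derivative_logOf_mul [Algebra ℚ A] {f : A⟦X⟧} (hf : constantCoeff f = 1) :
    d⁄dX A (logOf f) * f = d⁄dX A f := by
  have hs := hasSubst_sub_one hf
  -- `log' = 1 / (1 + X)`, and substituting `f - 1` for `X` turns `1 + X` into `f`
  have hgeom : d⁄dX A (log A) * (1 + X) = 1 := by
    ext n
    rcases n with _ | n
    · simp [deriv_log]
    · simp [deriv_log, mul_add, coeff_succ_mul_X, pow_succ]
  have hinv := congrArg (substAlgHom hs) hgeom
  rw [map_mul, map_add, map_one, coe_substAlgHom, subst_X hs, add_sub_cancel] at hinv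
  rw [logOf_eq, derivative_subst hs, mul_right_comm, hinv]
  simp

theorem derivative_pow_eq_mul_derivative_logOf [Algebra ℚ A] {f : A⟦X⟧}
    (hf : constantCoeff f = 1) (k : ℕ) :
    d⁄dX A (f ^ k) = k * d⁄dX A (logOf f) * f ^ k := by
  rcases k with _ | k
  · simp
  · rw [derivative_pow, ← derivative_logOf_mul hf, Nat.add_sub_cancel, pow_succ]
    ring

theorem logOf_expand [Algebra ℚ A] (p : ℕ) (hp : p ≠ 0) {f : A⟦X⟧} (hf : constantCoeff f = 1) :
    logOf (expand p hp f) = expand p hp (logOf f) := by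
  have hsub : expand p hp f - 1 = expand p hp (f - 1) := by rw [map_sub, map_one]
  rw [logOf_eq, logOf_eq, hsub]
  exact (expand_subst p hp (hasSubst_sub_one hf) (log A)).symm

theorem eq_of_derivative_eq_mul [IsAddTorsionFree A] {f g P : A⟦X⟧}
    (hf : d⁄dX A f = P * f) (hg : d⁄dX A g = P * g) (h0 : constantCoeff f = constantCoeff g) :
    f = g := by
  ext m
  induction m using Nat.strong_induction_on with
  | _ m ih =>
    rcases m with _ | m
    · simpa using h0
    · have hm : coeff m (d⁄dX A f) = coeff m (d⁄dX A g) := by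
        rw [hf, hg, coeff_mul, coeff_mul]
        refine Finset.sum_congr rfl fun ij hij => ?_
        rw [ih ij.2 (Finset.Nat.antidiagonal.snd_lt hij)]
      rw [coeff_derivative, coeff_derivative] at hm
      rwa [← Nat.cast_succ, ← nsmul_eq_mul', ← nsmul_eq_mul', nsmul_right_inj m.succ_ne_zero] at hm

end PowerSeries

theorem autCard_eq_prod_of_subset {s : Multiset ℕ} {T : Finset ℕ} (h : s.toFinset ⊆ T) :
    autCard s = ∏ i ∈ T, (s.count i).factorial :=
  Finset.prod_subset h fun i _ hi => by
    rw [Multiset.count_eq_zero.2 (by simpa using hi), Nat.factorial_zero]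

theorem autCard_cons (j : ℕ) (t : Multiset ℕ) :
    autCard (j ::ₘ t) = (t.count j + 1) * autCard t := by
  have hj : j ∈ insert j t.toFinset := Finset.mem_insert_self _ _
  rw [autCard_eq_prod_of_subset (T := insert j t.toFinset) (by simp),
    autCard_eq_prod_of_subset (Finset.subset_insert _ _), ← Finset.mul_prod_erase _ _ hj,
    ← Finset.mul_prod_erase _ _ hj, Multiset.count_cons_self, Nat.factorial_succ, mul_assoc]
  congr 2
  refine Finset.prod_congr rfl fun i hi => ?_
  rw [Multiset.count_cons_of_ne (Finset.ne_of_mem_erase hi)]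

theorem autCard_pos (s : Multiset ℕ) : 0 < autCard s :=
  Finset.prod_pos fun _ _ => Nat.factorial_pos _

section PartitionSum

variable {K : Type*} [Field K] [CharZero K]

noncomputable def partitionTerm (c : ℕ → K) (s : Multiset ℕ) : K :=
  (s.map c).prod / autCard s

/-- The coefficient of `y ^ g` in `exp (∑ j ≥ 1, c j * y ^ j)`. -/
noncomputable def partitionSum (c : ℕ → K) (g : ℕ) : K :=
  ∑ β : Nat.Partition g, partitionTerm c β.parts

theorem count_mul_partitionTerm (c : ℕ → K) {s : Multiset ℕ} {j : ℕ} (hj : j ∈ s) :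
    s.count j * partitionTerm c s = c j * partitionTerm c (s.erase j) := by
  conv_lhs => rw [← Multiset.cons_erase hj]
  have := Nat.cast_ne_zero (R := K).2 (autCard_pos (s.erase j)).ne'
  rw [partitionTerm, partitionTerm, Multiset.count_cons_self, Multiset.map_cons,
    Multiset.prod_cons, autCard_cons]
  push_cast
  field_simp

theorem partitionSum_zero (c : ℕ → K) : partitionSum c 0 = 1 := by
  simp [partitionSum, partitionTerm, autCard]

theorem mul_partitionTerm_eq_sum (c : ℕ → K) {g : ℕ} (β : Nat.Partition g) :
    g * partitionTerm c β.parts =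
      ∑ j ∈ β.parts.toFinset, j * c j * partitionTerm c (β.parts.erase j) := by
  have hg : (g : K) = ∑ j ∈ β.parts.toFinset, β.parts.count j • (j : K) := by
    rw [← Finset.sum_multiset_map_count, ← Nat.cast_multiset_sum, β.parts_sum]
  rw [hg, Finset.sum_mul]
  refine Finset.sum_congr rfl fun j hj => ?_
  rw [nsmul_eq_mul, mul_comm (_ : K) (j : K), mul_assoc, mul_assoc,
    count_mul_partitionTerm c (Multiset.mem_toFinset.1 hj)]

theorem mul_partitionSum_eq_sum (c : ℕ → K) (g : ℕ) :
    g * partitionSum c g = ∑ j ∈ Finset.Icc 1 g, j * c j * partitionSum c (g - j) := by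
  simp only [partitionSum, Finset.mul_sum, mul_partitionTerm_eq_sum]
  rw [Finset.sum_comm' (t' := Finset.Icc 1 g)
    (s' := fun j => Finset.univ.filter fun β : Nat.Partition g => j ∈ β.parts)]
  · refine Finset.sum_congr rfl fun j hj => ?_
    obtain ⟨hj1, hjg⟩ := Finset.mem_Icc.1 hj
    rw [Finset.sum_subtype _ (p := fun β : Nat.Partition g => j ∈ β.parts) (by simp)]
    exact Fintype.sum_equiv (Nat.Partition.partitionWithPartEquiv hj1 hjg) _ _ fun β => by simp
  · intro β j
    simp only [Finset.mem_univ, Multiset.mem_toFinset, Finset.mem_filter, true_and,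
      Finset.mem_Icc, iff_self_and]
    exact fun hj => ⟨β.parts_pos hj, Nat.Partition.le_of_mem_parts hj⟩

open PowerSeries in
theorem derivative_mk_partitionSum (c : ℕ → K) :
    d⁄dX K (mk (partitionSum c)) = d⁄dX K (mk c) * mk (partitionSum c) := by
  ext m
  rw [coeff_derivative, coeff_mk, coeff_mul, mul_comm, ← Nat.cast_succ, mul_partitionSum_eq_sum]
  simp only [coeff_derivative, coeff_mk]
  rw [Finset.Nat.sum_antidiagonal_eq_sum_range_succ
    (fun i j => c (i + 1) * ((i : K) + 1) * partitionSum c j)]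
  symm
  -- reindex by the part `j = i + 1`
  refine Finset.sum_nbij' (· + 1) (· - 1) ?_ ?_ ?_ ?_ ?_ <;> intro j hj <;> simp at hj ⊢
  all_goals first | omega | exact Or.inl (mul_comm _ _)

end PartitionSum

namespace PowerSeries

variable {R : Type*} [CommRing R]

theorem mk_ite_even_eq_expand (s : ℕ → R) :
    (mk fun k => if Even k then s (k / 2) else 0) = expand 2 two_ne_zero (mk s) := by
  ext k
  simp [coeff_expand, even_iff_two_dvd]

theorem eq_expand_two_of_coeff_odd {f : R⟦X⟧} (hf : ∀ k, Odd k → coeff k f = 0) :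
    f = expand 2 two_ne_zero (mk fun k => coeff (2 * k) f) := by
  ext k
  rw [coeff_expand, coeff_mk]
  split_ifs with hk
  · rw [Nat.mul_div_cancel' hk]
  · exact hf k (Nat.odd_iff.2 (by omega))

theorem derivative_expand (p : ℕ) (hp : p ≠ 0) (f : R⟦X⟧) :
    d⁄dX R (expand p hp f) = expand p hp (d⁄dX R f) * d⁄dX R (X ^ p) := by
  simpa only [expand_apply] using derivative_subst (HasSubst.X_pow hp)

theorem derivative_expand_eq_mul {p : ℕ} (hp : p ≠ 0) {f g : R⟦X⟧}
    (h : d⁄dX R f = d⁄dX R g * f) :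
    d⁄dX R (expand p hp f) = d⁄dX R (expand p hp g) * expand p hp f := by
  rw [derivative_expand, derivative_expand, h, map_mul]
  ring

end PowerSeries

open PowerSeries

theorem coeff_xiSeries_of_odd {k : ℕ} (hk : Odd k) : coeff k xiSeries = 0 := by
  simp [xiSeries, Nat.not_even_iff_odd.2 hk]

theorem constantCoeff_xiSeries : constantCoeff xiSeries = 1 := by
  simp [xiSeries]

theorem psLog_eq_logOf {f : ℚ⟦X⟧} (hf : constantCoeff f = 1) : psLog f = logOf f := by
  ext m
  rw [psLog, coeff_mk, logOf_eq, coeff_subst' (hasSubst_sub_one hf),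
    finsum_eq_sum_of_support_subset (s := Finset.range (m + 1))]
  · refine Finset.sum_congr rfl fun k _ => ?_
    rcases k with _ | k <;> simp
  · intro k hk
    by_contra h
    apply (Function.mem_support.1 hk)
    rw [coeff_pow_eq_zero_of_lt (by simp [hf]) (by simpa using h), smul_zero]

theorem psLog_xiSeries : psLog xiSeries = expand 2 two_ne_zero (mk xiCoeff) := by
  set ξ₀ := mk fun k => coeff (2 * k) xiSeries
  have hξ : xiSeries = expand 2 two_ne_zero ξ₀ :=
    eq_expand_two_of_coeff_odd fun _ => coeff_xiSeries_of_odd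
  have hξ₀ : constantCoeff ξ₀ = 1 := by
    rw [← constantCoeff_xiSeries, hξ, constantCoeff_expand]
  have hlog : psLog xiSeries = expand 2 two_ne_zero (logOf ξ₀) := by
    rw [psLog_eq_logOf constantCoeff_xiSeries, hξ, logOf_expand 2 two_ne_zero hξ₀]
  rw [hlog]
  congr 1
  ext j
  rw [coeff_mk, xiCoeff, hlog, coeff_expand_mul]

theorem pPow_one (α : Multiset ℕ) : pPow 1 α = α.sum := by
  simp [pPow]

theorem qPow_eq_qhatPow_add {n : ℕ} (hn : 1 ≤ n) {α : Multiset ℕ} (hsum : α.sum = n) (i : ℕ) :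
    qPow i α = qhatPow i α + (n - 1 : ℕ) := by
  rw [qPow, qhatPow, pPow_one, hsum, Nat.cast_sub hn]
  ring

theorem Qser_eq_partitionSum (g : ℕ) (α : Multiset ℕ) :
    Qser g α = partitionSum (fun b => xiCoeff b * qPow (2 * b) α) g := rfl

theorem Qhatser_eq_partitionSum (g : ℕ) (α : Multiset ℕ) :
    Qhatser g α = partitionSum (fun b => xiCoeff b * qhatPow (2 * b) α) g := rfl

theorem Qser_eq_xi_pow_mul_Qhatser_general (n : ℕ) (hn : 1 ≤ n)
    (α : Multiset ℕ) (hsum : α.sum = n) :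
    (PowerSeries.mk fun k => if Even k then Qser (k / 2) α else 0) =
      xiSeries ^ (n - 1) *
        PowerSeries.mk fun k => if Even k then Qhatser (k / 2) α else 0 := by
  simp only [Qser_eq_partitionSum, Qhatser_eq_partitionSum, mk_ite_even_eq_expand]
  set cq : ℕ → ℚ := fun b => xiCoeff b * qPow (2 * b) α
  set ch : ℕ → ℚ := fun b => xiCoeff b * qhatPow (2 * b) α
  have hc : mk cq = mk ch + (n - 1) • mk xiCoeff := by
    ext b
    rw [map_add, map_nsmul, coeff_mk, coeff_mk, coeff_mk, nsmul_eq_mul]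
    simp only [cq, ch, qPow_eq_qhatPow_add hn hsum]
    ring
  refine eq_of_derivative_eq_mul (P := d⁄dX ℚ (expand 2 two_ne_zero (mk cq)))
    (derivative_expand_eq_mul two_ne_zero (derivative_mk_partitionSum cq)) ?_ ?_
  · rw [Derivation.leibniz, derivative_pow_eq_mul_derivative_logOf constantCoeff_xiSeries,
      ← psLog_eq_logOf constantCoeff_xiSeries, psLog_xiSeries,
      derivative_expand_eq_mul two_ne_zero (derivative_mk_partitionSum ch), hc, map_add, map_nsmul,
      map_add, map_nsmul, smul_eq_mul, smul_eq_mul, nsmul_eq_mul]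
    ring
  · simp [partitionSum_zero, constantCoeff_xiSeries]

/-- `Σ_{g≥0} Q_g(α) x^{2g} = ξ(x)^{n-1} Σ_{g≥0} Q̂_g(α) x^{2g}` in
`ℚ[[x]]`, for `α` a partition of `n`. -/
theorem Qser_eq_xi_pow_mul_Qhatser (n : ℕ) (hn : 1 ≤ n)
    (α : Multiset ℕ) (hpos : ∀ a ∈ α, 0 < a) (hsum : α.sum = n) :
    (PowerSeries.mk fun k => if Even k then Qser (k / 2) α else 0) =
      xiSeries ^ (n - 1) *
        PowerSeries.mk fun k => if Even k then Qhatser (k / 2) α else 0 :=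
  Qser_eq_xi_pow_mul_Qhatser_general n hn α hsum
end
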